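/- arXiv:2510.09788 — 2 statements merged into one kernel-verified Lean document; each statement's English description precedes it below -/
import Mathlib

section
/- Let a₁, ..., a_r be multisegments (finite multisets of segments) such that whenever Δ ∈ a_i and Δ' ∈ a_j are linked, then i = j. Then, in the partial order on multisegments generated by elementary operations (replacing a pair of linked segments Δ, Δ' by Δ ∪ Δ' and Δ ∩ Δ', deleting the intersection if empty), the multisegments b with b ≤ a₁ + ⋯ + a_r are exactly those of the form b = b₁ + ⋯ + b_r with b_i ≤ a_i for each i. -/
/-- A segment, encoded as a pair `(a, b)` with `b - a` a nonnegative integer. -/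
def IsSeg (a b : ℝ) : Prop := ∃ k : ℕ, b = a + k

/-- Segments `(a,b)` and `(c,d)` are linked. -/
def LinkedP (Δ Δ' : ℝ × ℝ) : Prop :=
  (∃ m : ℤ, Δ.1 - Δ'.1 = (m : ℝ)) ∧
  ((Δ.1 < Δ'.1 ∧ Δ'.1 - 1 ≤ Δ.2 ∧ Δ.2 < Δ'.2) ∨
   (Δ'.1 ≤ Δ.1 ∧ Δ.1 ≤ Δ'.2 + 1 ∧ Δ'.2 < Δ.2))

/-- The union of two linked segments. -/
def segUnion (Δ Δ' : ℝ × ℝ) : ℝ × ℝ := (min Δ.1 Δ'.1, max Δ.2 Δ'.2)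

/-- The intersection of two linked segments (meaningful when nonempty). -/
def segInter (Δ Δ' : ℝ × ℝ) : ℝ × ℝ := (max Δ.1 Δ'.1, min Δ.2 Δ'.2)

/-- An elementary operation on a multisegment: replace a linked pair `Δ, Δ'`
by `Δ ∪ Δ'` and `Δ ∩ Δ'`, deleting the intersection if it is empty. -/
def ElemOp (m m' : Multiset (ℝ × ℝ)) : Prop :=
  ∃ (Δ Δ' : ℝ × ℝ) (rest : Multiset (ℝ × ℝ)),
    LinkedP Δ Δ' ∧ m = Δ ::ₘ Δ' ::ₘ rest ∧
    ((max Δ.1 Δ'.1 ≤ min Δ.2 Δ'.2 ∧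
        m' = segUnion Δ Δ' ::ₘ segInter Δ Δ' ::ₘ rest) ∨
     (¬ max Δ.1 Δ'.1 ≤ min Δ.2 Δ'.2 ∧ m' = segUnion Δ Δ' ::ₘ rest))

/-- `b ≤ a` in the ordering of multisegments: `b` is obtained from `a` by a
finite sequence of elementary operations. -/
def MsLe (b a : Multiset (ℝ × ℝ)) : Prop := Relation.ReflTransGen ElemOp a b

/-!
A segment linked with `Δ ∪ Δ'` or with `Δ ∩ Δ'` is already linked with `Δ` or with `Δ'`. Hence a
segment of `b ≤ a` linked with some `Γ` descends from a segment of `a` linked with `Γ`, and if no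
segment of `a` is linked with a segment of `c`, the same holds for any `b ≤ a` and `d ≤ c`. An
elementary operation on `b + d` then combines two segments of `b` or two segments of `d`, so every
chain of operations starting from `a + c` splits into one starting from `a` and one from `c`.
-/

lemma Multiset.cons_eq_add_cases {α : Type*} [DecidableEq α] {a : α} {s x y : Multiset α}
    (h : a ::ₘ s = x + y) : a ∈ x ∧ s = x.erase a + y ∨ a ∈ y ∧ s = x + y.erase a := by
  rcases Multiset.mem_add.1 (h ▸ Multiset.mem_cons_self a s) with hx | hy
  · refine Or.inl ⟨hx, (Multiset.cons_inj_right a).1 ?_⟩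
    rw [h, ← Multiset.cons_add, Multiset.cons_erase hx]
  · refine Or.inr ⟨hy, (Multiset.cons_inj_right a).1 ?_⟩
    rw [h, ← Multiset.add_cons, Multiset.cons_erase hy]

noncomputable def elemOpResult (Δ Δ' : ℝ × ℝ) : Multiset (ℝ × ℝ) :=
  if max Δ.1 Δ'.1 ≤ min Δ.2 Δ'.2 then {segUnion Δ Δ', segInter Δ Δ'} else {segUnion Δ Δ'}

lemma mem_elemOpResult {Δ Δ' Γ : ℝ × ℝ} (h : Γ ∈ elemOpResult Δ Δ') :
    Γ = segUnion Δ Δ' ∨ Γ = segInter Δ Δ' := by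
  unfold elemOpResult at h
  split_ifs at h <;> simp_all

lemma elemOp_iff {m m' : Multiset (ℝ × ℝ)} :
    ElemOp m m' ↔ ∃ (Δ Δ' : ℝ × ℝ) (rest : Multiset (ℝ × ℝ)),
      LinkedP Δ Δ' ∧ m = Δ ::ₘ Δ' ::ₘ rest ∧ m' = elemOpResult Δ Δ' + rest := by
  unfold ElemOp elemOpResult
  refine exists₃_congr fun Δ Δ' rest => and_congr_right fun _ => and_congr_right fun _ => ?_
  split_ifs with h <;> simp [h, Multiset.insert_eq_cons]

lemma ElemOp.add_right {m m' : Multiset (ℝ × ℝ)} (h : ElemOp m m') (c : Multiset (ℝ × ℝ)) :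
    ElemOp (m + c) (m' + c) := by
  obtain ⟨Δ, Δ', rest, hΔΔ', rfl, rfl⟩ := elemOp_iff.1 h
  exact elemOp_iff.2 ⟨Δ, Δ', rest + c, hΔΔ', by simp [Multiset.cons_add], add_assoc _ _ _⟩

lemma MsLe.trans {a b c : Multiset (ℝ × ℝ)} (hcb : MsLe c b) (hba : MsLe b a) : MsLe c a :=
  Relation.ReflTransGen.trans hba hcb

lemma MsLe.add_right {a b : Multiset (ℝ × ℝ)} (h : MsLe b a) (c : Multiset (ℝ × ℝ)) :
    MsLe (b + c) (a + c) := by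
  induction h with
  | refl => exact Relation.ReflTransGen.refl
  | tail _ hop ih => exact ih.tail (hop.add_right c)

lemma MsLe.add {a b c d : Multiset (ℝ × ℝ)} (hba : MsLe b a) (hdc : MsLe d c) :
    MsLe (b + d) (a + c) := by
  refine (hba.add_right d).trans ?_
  simpa only [add_comm a] using hdc.add_right a

lemma msLe_zero_iff {b : Multiset (ℝ × ℝ)} : MsLe b 0 ↔ b = 0 := by
  refine ⟨fun h => ?_, fun h => h ▸ Relation.ReflTransGen.refl⟩
  induction h with
  | refl => rfl
  | tail _ hop ih =>
    obtain ⟨Δ, Δ', rest, -, h, -⟩ := elemOp_iff.1 hop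
    exact absurd (ih ▸ h) (Multiset.cons_ne_zero).symm

def SegLinked (Δ Δ' : ℝ × ℝ) : Prop := LinkedP Δ Δ' ∨ LinkedP Δ' Δ

lemma SegLinked.symm {Δ Δ' : ℝ × ℝ} (h : SegLinked Δ Δ') : SegLinked Δ' Δ := Or.symm h

def Precedes (Δ Δ' : ℝ × ℝ) : Prop := Δ.1 ≤ Δ'.1 ∧ Δ'.1 ≤ Δ.2 + 1 ∧ Δ.2 < Δ'.2

lemma segLinked_iff {Δ Δ' : ℝ × ℝ} :
    SegLinked Δ Δ' ↔ (∃ m : ℤ, Δ.1 - Δ'.1 = m) ∧ (Precedes Δ Δ' ∨ Precedes Δ' Δ) := by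
  unfold SegLinked LinkedP Precedes
  constructor
  · rintro (⟨⟨m, hm⟩, h⟩ | ⟨⟨m, hm⟩, h⟩)
    · exact ⟨⟨m, hm⟩, by grind⟩
    · exact ⟨⟨-m, by push_cast; linarith⟩, by grind⟩
  · rintro ⟨⟨m, hm⟩, h | h⟩
    · exact Or.inr ⟨⟨-m, by push_cast; linarith⟩, Or.inr h⟩
    · exact Or.inl ⟨⟨m, hm⟩, Or.inr h⟩

lemma segLinked_of_segUnion_or_segInter {A B Γ Δ : ℝ × ℝ} (hAB : LinkedP A B)
    (hΔ : Δ = segUnion A B ∨ Δ = segInter A B) (hΓ : SegLinked Γ Δ) :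
    SegLinked Γ A ∨ SegLinked Γ B := by
  obtain ⟨⟨n, hn⟩, hΓΔ⟩ := segLinked_iff.1 hΓ
  obtain ⟨⟨m, hm⟩, hABord⟩ := segLinked_iff.1 (Or.inl hAB : SegLinked A B)
  have hΔ₁ : Δ.1 = A.1 ∨ Δ.1 = B.1 := by
    rcases hΔ with rfl | rfl
    exacts [min_choice A.1 B.1, max_choice A.1 B.1]
  have hA : ∃ k : ℤ, Γ.1 - A.1 = k := by
    rcases hΔ₁ with h | h
    exacts [⟨n, h ▸ hn⟩, ⟨n - m, by push_cast; linarith⟩]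
  have hB : ∃ k : ℤ, Γ.1 - B.1 = k := by
    rcases hΔ₁ with h | h
    exacts [⟨n + m, by push_cast; linarith⟩, ⟨n, h ▸ hn⟩]
  simp only [segLinked_iff, hA, hB, true_and]
  rcases hΔ with rfl | rfl <;> simp only [Precedes, segUnion, segInter] at hΓΔ hABord ⊢ <;> grind

lemma ElemOp.exists_segLinked {m m' : Multiset (ℝ × ℝ)} (h : ElemOp m m') {Γ Δ : ℝ × ℝ}
    (hΔ : Δ ∈ m') (hΓ : SegLinked Γ Δ) : ∃ Δ₀ ∈ m, SegLinked Γ Δ₀ := by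
  obtain ⟨A, B, rest, hAB, rfl, rfl⟩ := elemOp_iff.1 h
  rcases Multiset.mem_add.1 hΔ with hΔ | hΔ
  · rcases segLinked_of_segUnion_or_segInter hAB (mem_elemOpResult hΔ) hΓ with h | h
    exacts [⟨A, by simp, h⟩, ⟨B, by simp, h⟩]
  · exact ⟨Δ, by simp [hΔ], hΓ⟩

lemma MsLe.exists_segLinked {a b : Multiset (ℝ × ℝ)} (h : MsLe b a) {Γ Δ : ℝ × ℝ}
    (hΔ : Δ ∈ b) (hΓ : SegLinked Γ Δ) : ∃ Δ₀ ∈ a, SegLinked Γ Δ₀ := by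
  induction h generalizing Δ with
  | refl => exact ⟨Δ, hΔ, hΓ⟩
  | tail _ hop ih =>
    obtain ⟨Δ₁, hΔ₁, hΓ₁⟩ := hop.exists_segLinked hΔ hΓ
    exact ih hΔ₁ hΓ₁

def Unlinked (x y : Multiset (ℝ × ℝ)) : Prop := ∀ Δ ∈ x, ∀ Δ' ∈ y, ¬ SegLinked Δ Δ'

lemma Unlinked.symm {x y : Multiset (ℝ × ℝ)} (h : Unlinked x y) : Unlinked y x :=
  fun Δ hΔ Δ' hΔ' hl => h Δ' hΔ' Δ hΔ hl.symm

lemma Unlinked.of_msLe_left {a b c : Multiset (ℝ × ℝ)} (h : Unlinked a c) (hb : MsLe b a) :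
    Unlinked b c := by
  intro Δ hΔ Δ' hΔ' hl
  obtain ⟨Δ₀, hΔ₀, hl₀⟩ := hb.exists_segLinked hΔ hl.symm
  exact h Δ₀ hΔ₀ Δ' hΔ' hl₀.symm

lemma Unlinked.of_msLe {a b c d : Multiset (ℝ × ℝ)} (h : Unlinked a c) (hb : MsLe b a)
    (hd : MsLe d c) : Unlinked b d :=
  ((h.of_msLe_left hb).symm.of_msLe_left hd).symm

lemma ElemOp.of_add {x y m' : Multiset (ℝ × ℝ)} (h : ElemOp (x + y) m') (hxy : Unlinked x y) :
    (∃ x', ElemOp x x' ∧ m' = x' + y) ∨ (∃ y', ElemOp y y' ∧ m' = x + y') := by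
  classical
  obtain ⟨A, B, rest, hAB, hm, rfl⟩ := elemOp_iff.1 h
  rcases Multiset.cons_eq_add_cases hm.symm with ⟨hA, hm⟩ | ⟨hA, hm⟩ <;>
    rcases Multiset.cons_eq_add_cases hm with ⟨hB, rfl⟩ | ⟨hB, rfl⟩
  · refine Or.inl ⟨_, elemOp_iff.2 ⟨A, B, _, hAB, ?_, rfl⟩, (add_assoc _ _ _).symm⟩
    rw [Multiset.cons_erase hB, Multiset.cons_erase hA]
  · exact absurd (Or.inl hAB) (hxy A hA B hB)
  · exact absurd (Or.inr hAB) (hxy B hB A hA)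
  · refine Or.inr ⟨_, elemOp_iff.2 ⟨A, B, _, hAB, ?_, rfl⟩, add_left_comm _ _ _⟩
    rw [Multiset.cons_erase hB, Multiset.cons_erase hA]

theorem msLe_add_iff {a c : Multiset (ℝ × ℝ)} (hac : Unlinked a c) {b : Multiset (ℝ × ℝ)} :
    MsLe b (a + c) ↔ ∃ b₁ b₂, MsLe b₁ a ∧ MsLe b₂ c ∧ b = b₁ + b₂ := by
  refine ⟨fun h => ?_, fun ⟨b₁, b₂, h₁, h₂, hb⟩ => hb ▸ h₁.add h₂⟩
  induction h with
  | refl => exact ⟨a, c, Relation.ReflTransGen.refl, Relation.ReflTransGen.refl, rfl⟩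
  | tail _ hop ih =>
    obtain ⟨b₁, b₂, h₁, h₂, rfl⟩ := ih
    rcases hop.of_add (hac.of_msLe h₁ h₂) with ⟨b₁', hop₁, rfl⟩ | ⟨b₂', hop₂, rfl⟩
    · exact ⟨b₁', b₂, Relation.ReflTransGen.tail h₁ hop₁, h₂, rfl⟩
    · exact ⟨b₁, b₂', h₁, Relation.ReflTransGen.tail h₂ hop₂, rfl⟩

theorem msLe_sum_iff_of_pairwise {ι : Type*} [DecidableEq ι] {s : Finset ι}
    {a : ι → Multiset (ℝ × ℝ)} (ha : (s : Set ι).Pairwise fun i j => Unlinked (a i) (a j))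
    (b : Multiset (ℝ × ℝ)) :
    MsLe b (∑ i ∈ s, a i) ↔
      ∃ b' : ι → Multiset (ℝ × ℝ), (∀ i ∈ s, MsLe (b' i) (a i)) ∧ b = ∑ i ∈ s, b' i := by
  induction s using Finset.induction generalizing b with
  | empty => simp [msLe_zero_iff]
  | insert j s hj ih =>
    have hs : (s : Set ι).Pairwise fun i j => Unlinked (a i) (a j) :=
      ha.mono (Finset.coe_subset.2 (Finset.subset_insert j s))
    have hunl : Unlinked (a j) (∑ i ∈ s, a i) := by
      intro Δ hΔ Δ' hΔ'
      obtain ⟨i, hi, hΔ'⟩ := Multiset.mem_sum.1 hΔ'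
      exact ha (by simp) (by simp [hi]) (ne_of_mem_of_not_mem hi hj).symm Δ hΔ Δ' hΔ'
    simp only [Finset.sum_insert hj, msLe_add_iff hunl, ih hs, Finset.forall_mem_insert]
    constructor
    · rintro ⟨b₁, _, h₁, ⟨b', hb', rfl⟩, rfl⟩
      refine ⟨Function.update b' j b₁, ⟨by simpa using h₁, fun i hi => ?_⟩, ?_⟩
      · simpa [ne_of_mem_of_not_mem hi hj] using hb' i hi
      · rw [Function.update_self, Finset.sum_update_of_notMem hj]
    · rintro ⟨b', ⟨h₁, hb'⟩, rfl⟩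
      exact ⟨b' j, _, h₁, ⟨b', hb', rfl⟩, rfl⟩

theorem msle_sum_iff_general (r : ℕ) (a : Fin r → Multiset (ℝ × ℝ))
    (ha : ∀ (i j : Fin r) (Δ Δ' : ℝ × ℝ), Δ ∈ a i → Δ' ∈ a j → LinkedP Δ Δ' → i = j) :
    ∀ b : Multiset (ℝ × ℝ),
      MsLe b (∑ i, a i) ↔
        ∃ b' : Fin r → Multiset (ℝ × ℝ),
          (∀ i, MsLe (b' i) (a i)) ∧ b = ∑ i, b' i := by
  have hpair : ((Finset.univ : Finset (Fin r)) : Set (Fin r)).Pairwise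
      fun i j => Unlinked (a i) (a j) :=
    fun i _ j _ hij Δ hΔ Δ' hΔ' hl =>
      hij (hl.elim (ha i j Δ Δ' hΔ hΔ') fun h => (ha j i Δ' Δ hΔ' hΔ h).symm)
  simpa using msLe_sum_iff_of_pairwise hpair

theorem msle_sum_iff (r : ℕ) (a : Fin r → Multiset (ℝ × ℝ))
    (hseg : ∀ (i : Fin r) (Δ : ℝ × ℝ), Δ ∈ a i → IsSeg Δ.1 Δ.2)
    (ha : ∀ (i j : Fin r) (Δ Δ' : ℝ × ℝ), Δ ∈ a i → Δ' ∈ a j → LinkedP Δ Δ' → i = j) :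
    ∀ b : Multiset (ℝ × ℝ),
      MsLe b (∑ i, a i) ↔
        ∃ b' : Fin r → Multiset (ℝ × ℝ),
          (∀ i, MsLe (b' i) (a i)) ∧ b = ∑ i, b' i :=
  msle_sum_iff_general r a ha
end

section
/- With the hypotheses of the previous statement, if b = b₁ + ⋯ + b_r ≤ a₁ + ⋯ + a_r with b_i ≤ a_i, then b inherits the separation property: whenever Δ ∈ b_i and Δ' ∈ b_j are linked, i = j. -/
/-! ### Auxiliary machinery -/

/-- Integer-offset version of `LinkedP`. -/
def IntLinked (p q s t : ℤ) : Prop :=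
  (p < s ∧ s ≤ q + 1 ∧ q < t) ∨ (s ≤ p ∧ p ≤ t + 1 ∧ t < q)

lemma linkedP_iff_int {Δ Δ' : ℝ × ℝ} {x : ℝ} {p q s t : ℤ}
    (h1 : Δ.1 = x + p) (h2 : Δ.2 = x + q) (h3 : Δ'.1 = x + s) (h4 : Δ'.2 = x + t) :
    LinkedP Δ Δ' ↔ IntLinked p q s t := by
  unfold LinkedP IntLinked
  rw [h1, h2, h3, h4]
  constructor
  · rintro ⟨-, (⟨u1, u2, u3⟩ | ⟨u1, u2, u3⟩)⟩
    · left
      refine ⟨by exact_mod_cast lt_of_add_lt_add_left u1, ?_,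
        by exact_mod_cast lt_of_add_lt_add_left u3⟩
      have : (s : ℝ) ≤ (q : ℝ) + 1 := by linarith
      exact_mod_cast this
    · right
      refine ⟨by exact_mod_cast le_of_add_le_add_left u1, ?_,
        by exact_mod_cast lt_of_add_lt_add_left u3⟩
      have : (p : ℝ) ≤ (t : ℝ) + 1 := by linarith
      exact_mod_cast this
  · intro h
    refine ⟨⟨p - s, by push_cast; ring⟩, ?_⟩
    rcases h with ⟨u1, u2, u3⟩ | ⟨u1, u2, u3⟩
    · have c1 : (p : ℝ) < s := by exact_mod_cast u1
      have c2 : (s : ℝ) ≤ (q : ℝ) + 1 := by exact_mod_cast u2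
      have c3 : (q : ℝ) < t := by exact_mod_cast u3
      exact Or.inl ⟨by linarith, by linarith, by linarith⟩
    · have c1 : (s : ℝ) ≤ p := by exact_mod_cast u1
      have c2 : (p : ℝ) ≤ (t : ℝ) + 1 := by exact_mod_cast u2
      have c3 : (t : ℝ) < q := by exact_mod_cast u3
      exact Or.inr ⟨by linarith, by linarith, by linarith⟩

lemma min_shift (x : ℝ) (p s : ℤ) : min (x + p) (x + s) = x + ((min p s : ℤ) : ℝ) := by
  rcases le_total p s with h | h
  · have h' : (p : ℝ) ≤ s := by exact_mod_cast h
    rw [min_eq_left h, min_eq_left (by linarith : x + (p:ℝ) ≤ x + s)]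
  · have h' : (s : ℝ) ≤ p := by exact_mod_cast h
    rw [min_eq_right h, min_eq_right (by linarith : x + (s:ℝ) ≤ x + p)]

lemma max_shift (x : ℝ) (p s : ℤ) : max (x + p) (x + s) = x + ((max p s : ℤ) : ℝ) := by
  rcases le_total p s with h | h
  · have h' : (p : ℝ) ≤ s := by exact_mod_cast h
    rw [max_eq_right h, max_eq_right (by linarith : x + (p:ℝ) ≤ x + s)]
  · have h' : (s : ℝ) ≤ p := by exact_mod_cast h
    rw [max_eq_left h, max_eq_left (by linarith : x + (s:ℝ) ≤ x + p)]

lemma isSeg_of_int (x : ℝ) (u v : ℤ) (h : u ≤ v) : IsSeg (x + u) (x + v) :=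
  ⟨(v - u).toNat, by
    have : (((v - u).toNat : ℕ) : ℝ) = (v : ℝ) - u := by
      rw [← Int.cast_natCast, Int.toNat_of_nonneg (by omega)]
      push_cast; ring
    rw [this]; ring⟩

/-- Data of the integer offsets of two linked segments. -/
lemma offsets_of_linked {Δ Δ' : ℝ × ℝ} (hΔ : IsSeg Δ.1 Δ.2) (hΔ' : IsSeg Δ'.1 Δ'.2)
    (hDE : LinkedP Δ Δ') :
    ∃ (q s t : ℤ), Δ.2 = Δ.1 + (q : ℝ) ∧ Δ'.1 = Δ.1 + (s : ℝ) ∧ Δ'.2 = Δ.1 + (t : ℝ) ∧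
      0 ≤ q ∧ s ≤ t := by
  obtain ⟨kb, hkb⟩ := hΔ
  obtain ⟨kd, hkd⟩ := hΔ'
  obtain ⟨m, hm⟩ := hDE.1
  refine ⟨kb, -m, -m + kd, by rw [hkb]; push_cast; ring, by push_cast; linarith,
    by rw [hkd]; push_cast; linarith, Int.natCast_nonneg kb, by omega⟩

lemma isSeg_segUnion {Δ Δ' : ℝ × ℝ} (hΔ : IsSeg Δ.1 Δ.2) (hΔ' : IsSeg Δ'.1 Δ'.2)
    (hDE : LinkedP Δ Δ') : IsSeg (segUnion Δ Δ').1 (segUnion Δ Δ').2 := by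
  obtain ⟨q, s, t, h2, h3, h4, hq, hst⟩ := offsets_of_linked hΔ hΔ' hDE
  set x := Δ.1 with hx
  have h1 : Δ.1 = x + ((0 : ℤ) : ℝ) := by push_cast; ring
  have hU1 : (segUnion Δ Δ').1 = x + ((min 0 s : ℤ) : ℝ) := by
    show min Δ.1 Δ'.1 = _
    rw [h1, h3, min_shift]
  have hU2 : (segUnion Δ Δ').2 = x + ((max q t : ℤ) : ℝ) := by
    show max Δ.2 Δ'.2 = _
    rw [h2, h4, max_shift]
  rw [hU1, hU2]
  exact isSeg_of_int x _ _ (by omega)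

lemma isSeg_segInter {Δ Δ' : ℝ × ℝ} (hΔ : IsSeg Δ.1 Δ.2) (hΔ' : IsSeg Δ'.1 Δ'.2)
    (hDE : LinkedP Δ Δ') (hne : max Δ.1 Δ'.1 ≤ min Δ.2 Δ'.2) :
    IsSeg (segInter Δ Δ').1 (segInter Δ Δ').2 := by
  obtain ⟨q, s, t, h2, h3, h4, hq, hst⟩ := offsets_of_linked hΔ hΔ' hDE
  set x := Δ.1 with hx
  have h1 : Δ.1 = x + ((0 : ℤ) : ℝ) := by push_cast; ring
  have hI1 : (segInter Δ Δ').1 = x + ((max 0 s : ℤ) : ℝ) := by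
    show max Δ.1 Δ'.1 = _
    rw [h1, h3, max_shift]
  have hI2 : (segInter Δ Δ').2 = x + ((min q t : ℤ) : ℝ) := by
    show min Δ.2 Δ'.2 = _
    rw [h2, h4, min_shift]
  have hne' : (segInter Δ Δ').1 ≤ (segInter Δ Δ').2 := hne
  rw [hI1, hI2] at hne' ⊢
  have : ((max 0 s : ℤ) : ℝ) ≤ ((min q t : ℤ) : ℝ) := by linarith
  exact isSeg_of_int x _ _ (by exact_mod_cast this)

/-- The core propagation fact: a segment unlinked (both ways) with both members of
a linked pair stays unlinked with their union and intersection. -/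
lemma unlinked_step {Δ Δ' Γ : ℝ × ℝ}
    (hΔ : IsSeg Δ.1 Δ.2) (hΔ' : IsSeg Δ'.1 Δ'.2) (hΓ : IsSeg Γ.1 Γ.2)
    (hDE : LinkedP Δ Δ')
    (h1 : ¬ LinkedP Γ Δ) (h2 : ¬ LinkedP Δ Γ)
    (h3 : ¬ LinkedP Γ Δ') (h4 : ¬ LinkedP Δ' Γ) :
    (¬ LinkedP Γ (segUnion Δ Δ') ∧ ¬ LinkedP (segUnion Δ Δ') Γ) ∧
    (¬ LinkedP Γ (segInter Δ Δ') ∧ ¬ LinkedP (segInter Δ Δ') Γ) := by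
  obtain ⟨q, s, t, e2, e3, e4, hq, hst⟩ := offsets_of_linked hΔ hΔ' hDE
  obtain ⟨kf, hkf⟩ := hΓ
  set x := Δ.1 with hx
  have e1 : Δ.1 = x + ((0 : ℤ) : ℝ) := by push_cast; ring
  have hU1 : (segUnion Δ Δ').1 = x + ((min 0 s : ℤ) : ℝ) := by
    show min Δ.1 Δ'.1 = _; rw [e1, e3, min_shift]
  have hU2 : (segUnion Δ Δ').2 = x + ((max q t : ℤ) : ℝ) := by
    show max Δ.2 Δ'.2 = _; rw [e2, e4, max_shift]
  have hI1 : (segInter Δ Δ').1 = x + ((max 0 s : ℤ) : ℝ) := by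
    show max Δ.1 Δ'.1 = _; rw [e1, e3, max_shift]
  have hI2 : (segInter Δ Δ').2 = x + ((min q t : ℤ) : ℝ) := by
    show min Δ.2 Δ'.2 = _; rw [e2, e4, min_shift]
  -- helper to finish once we know Γ's offset
  have key : ∀ E : ℤ, Γ.1 = x + (E : ℝ) →
      ¬ IntLinked E (E + kf) (min 0 s) (max q t) ∧
      ¬ IntLinked (min 0 s) (max q t) E (E + kf) ∧
      ¬ IntLinked E (E + kf) (max 0 s) (min q t) ∧
      ¬ IntLinked (max 0 s) (min q t) E (E + kf) := by
    intro E hE1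
    have hE2 : Γ.2 = x + ((E + kf : ℤ) : ℝ) := by rw [hkf, hE1]; push_cast; ring
    have hDE' : IntLinked 0 q s t := (linkedP_iff_int e1 e2 e3 e4).mp hDE
    have h1' : ¬ IntLinked E (E + kf) 0 q :=
      fun h => h1 ((linkedP_iff_int hE1 hE2 e1 e2).mpr h)
    have h2' : ¬ IntLinked 0 q E (E + kf) :=
      fun h => h2 ((linkedP_iff_int e1 e2 hE1 hE2).mpr h)
    have h3' : ¬ IntLinked E (E + kf) s t :=
      fun h => h3 ((linkedP_iff_int hE1 hE2 e3 e4).mpr h)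
    have h4' : ¬ IntLinked s t E (E + kf) :=
      fun h => h4 ((linkedP_iff_int e3 e4 hE1 hE2).mpr h)
    unfold IntLinked at *
    omega
  refine ⟨⟨?_, ?_⟩, ?_, ?_⟩
  · intro hL
    obtain ⟨n, hn⟩ := hL.1
    have hE1 : Γ.1 = x + ((n + min 0 s : ℤ) : ℝ) := by
      rw [hU1] at hn; push_cast at hn ⊢; linarith
    exact (key _ hE1).1 ((linkedP_iff_int hE1 (by rw [hkf, hE1]; push_cast; ring) hU1 hU2).mp hL)
  · intro hL
    obtain ⟨n, hn⟩ := hL.1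
    have hE1 : Γ.1 = x + ((min 0 s - n : ℤ) : ℝ) := by
      rw [hU1] at hn; push_cast at hn ⊢; linarith
    exact (key _ hE1).2.1 ((linkedP_iff_int hU1 hU2 hE1 (by rw [hkf, hE1]; push_cast; ring)).mp hL)
  · intro hL
    obtain ⟨n, hn⟩ := hL.1
    have hE1 : Γ.1 = x + ((n + max 0 s : ℤ) : ℝ) := by
      rw [hI1] at hn; push_cast at hn ⊢; linarith
    exact (key _ hE1).2.2.1 ((linkedP_iff_int hE1 (by rw [hkf, hE1]; push_cast; ring) hI1 hI2).mp hL)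
  · intro hL
    obtain ⟨n, hn⟩ := hL.1
    have hE1 : Γ.1 = x + ((max 0 s - n : ℤ) : ℝ) := by
      rw [hI1] at hn; push_cast at hn ⊢; linarith
    exact (key _ hE1).2.2.2 ((linkedP_iff_int hI1 hI2 hE1 (by rw [hkf, hE1]; push_cast; ring)).mp hL)

/-- One elementary operation preserves both invariants. -/
lemma elemOp_invariant {m m' : Multiset (ℝ × ℝ)} (h : ElemOp m m')
    (hs : ∀ Δ ∈ m, IsSeg Δ.1 Δ.2) :
    (∀ Δ ∈ m', IsSeg Δ.1 Δ.2) ∧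
    ∀ Γ : ℝ × ℝ, IsSeg Γ.1 Γ.2 →
      (∀ Δ ∈ m, ¬ LinkedP Γ Δ ∧ ¬ LinkedP Δ Γ) →
      ∀ Δ ∈ m', ¬ LinkedP Γ Δ ∧ ¬ LinkedP Δ Γ := by
  obtain ⟨Δ, Δ', rest, hlink, hm, hcase⟩ := h
  have hΔm : Δ ∈ m := by rw [hm]; exact Multiset.mem_cons_self _ _
  have hΔ'm : Δ' ∈ m := by
    rw [hm]; exact Multiset.mem_cons_of_mem (Multiset.mem_cons_self _ _)
  have hrest : ∀ Θ ∈ rest, Θ ∈ m := fun Θ hΘ => by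
    rw [hm]; exact Multiset.mem_cons_of_mem (Multiset.mem_cons_of_mem hΘ)
  have hΔ : IsSeg Δ.1 Δ.2 := hs Δ hΔm
  have hΔ' : IsSeg Δ'.1 Δ'.2 := hs Δ' hΔ'm
  rcases hcase with ⟨hne, hm'⟩ | ⟨hne, hm'⟩
  · constructor
    · intro Θ hΘ
      rw [hm'] at hΘ
      rcases Multiset.mem_cons.mp hΘ with rfl | hΘ
      · exact isSeg_segUnion hΔ hΔ' hlink
      rcases Multiset.mem_cons.mp hΘ with rfl | hΘ
      · exact isSeg_segInter hΔ hΔ' hlink hne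
      · exact hs Θ (hrest Θ hΘ)
    · intro Γ hΓ hunl Θ hΘ
      rw [hm'] at hΘ
      have H := unlinked_step hΔ hΔ' hΓ hlink (hunl Δ hΔm).1 (hunl Δ hΔm).2
        (hunl Δ' hΔ'm).1 (hunl Δ' hΔ'm).2
      rcases Multiset.mem_cons.mp hΘ with rfl | hΘ
      · exact H.1
      rcases Multiset.mem_cons.mp hΘ with rfl | hΘ
      · exact H.2
      · exact hunl Θ (hrest Θ hΘ)
  · constructor
    · intro Θ hΘ
      rw [hm'] at hΘ
      rcases Multiset.mem_cons.mp hΘ with rfl | hΘ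
      · exact isSeg_segUnion hΔ hΔ' hlink
      · exact hs Θ (hrest Θ hΘ)
    · intro Γ hΓ hunl Θ hΘ
      rw [hm'] at hΘ
      have H := unlinked_step hΔ hΔ' hΓ hlink (hunl Δ hΔm).1 (hunl Δ hΔm).2
        (hunl Δ' hΔ'm).1 (hunl Δ' hΔ'm).2
      rcases Multiset.mem_cons.mp hΘ with rfl | hΘ
      · exact H.1
      · exact hunl Θ (hrest Θ hΘ)

/-- The invariants propagate along a chain of elementary operations. -/
lemma msle_invariant {m m' : Multiset (ℝ × ℝ)} (h : MsLe m' m)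
    (hs : ∀ Δ ∈ m, IsSeg Δ.1 Δ.2) :
    (∀ Δ ∈ m', IsSeg Δ.1 Δ.2) ∧
    ∀ Γ : ℝ × ℝ, IsSeg Γ.1 Γ.2 →
      (∀ Δ ∈ m, ¬ LinkedP Γ Δ ∧ ¬ LinkedP Δ Γ) →
      ∀ Δ ∈ m', ¬ LinkedP Γ Δ ∧ ¬ LinkedP Δ Γ := by
  induction h with
  | refl => exact ⟨hs, fun Γ _ hunl => hunl⟩
  | tail _ hstep ih =>
    have step := elemOp_invariant hstep ih.1
    exact ⟨step.1, fun Γ hΓ hunl => step.2 Γ hΓ (ih.2 Γ hΓ hunl)⟩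


theorem msle_sum_separation (r : ℕ) (a b : Fin r → Multiset (ℝ × ℝ))
    (hseg : ∀ (i : Fin r) (Δ : ℝ × ℝ), Δ ∈ a i → IsSeg Δ.1 Δ.2)
    (ha : ∀ (i j : Fin r) (Δ Δ' : ℝ × ℝ), Δ ∈ a i → Δ' ∈ a j → LinkedP Δ Δ' → i = j)
    (hb : ∀ i, MsLe (b i) (a i)) :
    ∀ (i j : Fin r) (Δ Δ' : ℝ × ℝ), Δ ∈ b i → Δ' ∈ b j → LinkedP Δ Δ' → i = j := by
  intro i j Δ Δ' hΔ hΔ' hlink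
  by_contra hne
  have invj := msle_invariant (hb j) (hseg j)
  have invi := msle_invariant (hb i) (hseg i)
  -- Δ' ∈ b j is a segment
  have hΔ'seg : IsSeg Δ'.1 Δ'.2 := invj.1 Δ' hΔ'
  -- Step A: every element of `a i` is unlinked with everything in `b j`,
  -- in particular with Δ'.
  have stepA : ∀ Θ ∈ a i, ¬ LinkedP Θ Δ' ∧ ¬ LinkedP Δ' Θ := by
    intro Θ hΘ
    exact invj.2 Θ (hseg i Θ hΘ)
      (fun Ξ hΞ => ⟨fun h => hne (ha i j Θ Ξ hΘ hΞ h),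
                    fun h => hne ((ha j i Ξ Θ hΞ hΘ h).symm)⟩) Δ' hΔ'
  -- Step B: Δ' is unlinked with everything in `b i`, in particular with Δ.
  have stepB := invi.2 Δ' hΔ'seg
    (fun Θ hΘ => ⟨(stepA Θ hΘ).2, (stepA Θ hΘ).1⟩) Δ hΔ
  exact stepB.2 hlink
end
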